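/- arXiv:1610.04025 — 4 statements merged into one kernel-verified Lean document; each statement's English description precedes it below -/
import Mathlib

section
/- Let t ≥ 1 and N be natural numbers, write N = q·t + r with q = ⌊N/t⌋ and 0 ≤ r < t. Then for every b : Fin t → ℕ with Σ_{i} b(i) = N, one has Σ_{i} C(b(i), 2) ≥ r · C(q+1, 2) + (t - r) · C(q, 2), where C(x, 2) = x(x-1)/2; i.e., the balanced partition (r parts of size q+1 and t-r parts of size q) minimizes the total number of within-part pairs. -/
lemma two_mul_choose_two_int (n : ℕ) : (2 * Nat.choose n 2 : ℤ) = n * (n - 1) := by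
  induction n with
  | zero => simp
  | succ k ih =>
    rw [Nat.choose_succ_succ]
    push_cast
    push_cast at ih
    simp [Nat.choose_one_right] at *
    nlinarith [ih]

/-- The balanced partition (`r` parts of size `q+1` and `t - r` parts of size `q`, where
`N = q·t + r` with `0 ≤ r < t`) minimizes the total number of within-part pairs. -/
theorem sum_choose_two_ge_balanced (t N q r : ℕ) (ht : 1 ≤ t)
    (hN : N = q * t + r) (hr : r < t)
    (b : Fin t → ℕ) (hsum : ∑ i, b i = N) :
    ∑ i, Nat.choose (b i) 2 ≥ r * Nat.choose (q + 1) 2 + (t - r) * Nat.choose q 2 := by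
  have key : (0:ℤ) ≤ ∑ i, (((b i : ℤ) - q) * ((b i : ℤ) - q - 1)) := by
    apply Finset.sum_nonneg
    intro i _
    rcases le_or_gt ((b i : ℤ) - q) 0 with h | h
    · nlinarith
    · have : (1:ℤ) ≤ (b i : ℤ) - q := h
      nlinarith
  have expand : ∑ i, (((b i : ℤ) - q) * ((b i : ℤ) - q - 1))
      = (∑ i, ((b i : ℤ) * ((b i : ℤ) - 1))) - (2 * q) * (∑ i, (b i : ℤ))
        + t * (q * (q + 1)) := by
    rw [Finset.mul_sum, ← Finset.sum_sub_distrib]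
    have hcard : ∑ _i : Fin t, (q * (q+1) : ℤ) = t * (q * (q+1)) := by
      simp [Finset.sum_const, mul_comm]
    rw [← hcard, ← Finset.sum_add_distrib]
    apply Finset.sum_congr rfl
    intro i _
    ring
  have hsumZ : (∑ i, (b i : ℤ)) = q * t + r := by
    have : ((∑ i, b i : ℕ) : ℤ) = ((q * t + r : ℕ) : ℤ) := by rw [hsum, hN]
    push_cast at this
    linarith [this]
  have hchoose : ∑ i, ((b i : ℤ) * ((b i : ℤ) - 1)) = 2 * ∑ i, (Nat.choose (b i) 2 : ℤ) := by
    rw [Finset.mul_sum]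
    exact Finset.sum_congr rfl fun i _ => (two_mul_choose_two_int (b i)).symm
  -- reduce goal to ℤ
  zify [hr.le]
  have h1 := two_mul_choose_two_int (q + 1)
  have h2 := two_mul_choose_two_int q
  push_cast at h1 h2 ⊢
  rw [hsumZ, hchoose] at expand
  nlinarith [key, expand, h1, h2, hr, (by exact_mod_cast hr.le : (r:ℤ) ≤ t)]
end

section
/- Let n and k be natural numbers with 4(k+1) ≤ n. For every function f : Fin (n-k) → Fin (k+1), the number of unordered pairs {i, j} with i ≠ j and f(i) = f(j) is at least n²/(16(k+1)) (as a real number). Consequently, if k ciphertexts out of n have their order completely known and the remaining n - k ciphertexts are each assigned to one of the k + 1 gaps between sorted ciphertexts, at least n²/(16(k+1)) pairs of ciphertexts remain incomparable. -/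
/-!
The pairs in question are the pairs inside the fibres of `f`, so their number is
`∑_c C(m_c, 2)`, where `m_c` are the fibre sizes. Since `2 C(m, 2) + m = m²`, Cauchy–Schwarz
`(∑ m_c)² ≤ (k + 1) ∑ m_c²` gives `(n - k)² ≤ (k + 1) (2 · #pairs + n - k)`, and the hypothesis
`4 (k + 1) ≤ n` makes `n - k ≥ 3n/4` and `n - 2k - 1 ≥ n/2`, whence `#pairs ≥ n² / (16 (k + 1))`.
-/

open Finset

theorem sq_eq_two_mul_choose_two_add (m : ℕ) : m ^ 2 = 2 * m.choose 2 + m := by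
  rw [Nat.choose_two_right, Nat.mul_div_cancel' (Nat.even_mul_pred_self m).two_dvd]
  cases m <;> simp [sq, Nat.mul_succ]

theorem sq_sum_le_card_mul_two_mul_sum_choose_two_add_sum {ι : Type*} (s : Finset ι)
    (m : ι → ℕ) :
    (∑ i ∈ s, m i) ^ 2 ≤ #s * (2 * ∑ i ∈ s, (m i).choose 2 + ∑ i ∈ s, m i) := by
  calc (∑ i ∈ s, m i) ^ 2 ≤ #s * ∑ i ∈ s, m i ^ 2 := sq_sum_le_card_mul_sum_sq
    _ = #s * (2 * ∑ i ∈ s, (m i).choose 2 + ∑ i ∈ s, m i) := by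
      simp only [sq_eq_two_mul_choose_two_add, sum_add_distrib, mul_sum]

section Fibres

variable {α β : Type*} [Fintype α] [LinearOrder α] [Fintype β] [DecidableEq β]

theorem card_filter_lt_and_apply_eq (f : α → β) :
    #{p : α × α | p.1 < p.2 ∧ f p.1 = f p.2} = ∑ b, (#{a | f a = b}).choose 2 := by
  rw [card_eq_sum_card_fiberwise (f := fun p : α × α ↦ f p.1) fun _ _ ↦ mem_univ _]
  refine sum_congr rfl fun b _ ↦ ?_
  rw [← card_product_filter_lt]
  congr 1
  ext p
  simp only [mem_filter, mem_univ, true_and, mem_product]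
  constructor
  · rintro ⟨⟨hlt, heq⟩, rfl⟩
    exact ⟨⟨rfl, heq.symm⟩, hlt⟩
  · rintro ⟨⟨h1, h2⟩, hlt⟩
    exact ⟨⟨hlt, h1.trans h2.symm⟩, h1⟩

theorem sq_card_le_card_mul_two_mul_card_filter_lt_and_apply_eq_add (f : α → β) :
    Fintype.card α ^ 2 ≤
      Fintype.card β * (2 * #{p : α × α | p.1 < p.2 ∧ f p.1 = f p.2} + Fintype.card α) := by
  have hfibres : ∑ b, #{a | f a = b} = Fintype.card α :=
    (card_eq_sum_card_fiberwise fun a _ ↦ mem_univ (f a)).symm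
  rw [card_filter_lt_and_apply_eq, ← hfibres]
  exact sq_sum_le_card_mul_two_mul_sum_choose_two_add_sum univ _

end Fibres

/-- If `k` ciphertexts out of `n` have their order completely known (with `4(k+1) ≤ n`) and
the remaining `n - k` ciphertexts are each assigned to one of the `k + 1` gaps, then at least
`n² / (16(k+1))` pairs of ciphertexts remain incomparable. -/
theorem incomparable_pairs_lower_bound (n k : ℕ) (h : 4 * (k + 1) ≤ n)
    (f : Fin (n - k) → Fin (k + 1)) :
    (n : ℝ) ^ 2 / (16 * (k + 1)) ≤
      ((Finset.univ.filter
        (fun p : Fin (n - k) × Fin (n - k) => p.1 < p.2 ∧ f p.1 = f p.2)).card : ℝ) := by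
  have hcs : ((n - k : ℕ) : ℝ) ^ 2 ≤ (k + 1) *
      (2 * #{p : Fin (n - k) × Fin (n - k) | p.1 < p.2 ∧ f p.1 = f p.2} + ((n - k : ℕ) : ℝ)) := by
    exact_mod_cast Fintype.card_fin (n - k) ▸ Fintype.card_fin (k + 1) ▸
      sq_card_le_card_mul_two_mul_card_filter_lt_and_apply_eq_add f
  rw [Nat.cast_sub (by omega)] at hcs
  have h4 : (4 : ℝ) * (k + 1) ≤ n := by exact_mod_cast h
  rw [div_le_iff₀ (by positivity)]
  nlinarith [sq_nonneg ((n : ℝ) - 2 * k)]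
end

section
/- Let n and k be natural numbers with n ≥ 3k + 2. For every function f : Fin (n-k) → Fin (k+1), the number of unordered pairs {i, j} with i ≠ j and f(i) = f(j) is at least (n - 2k - 1)(n - 3k - 2)/(2(k+1)) (as a real number). In particular, the number of incomparable ciphertext pairs in the worst-case POPE server view with k sorted ciphertexts is Ω(n²/k − n). -/
open Finset in
/-- With `k` sorted ciphertexts out of `n` (where `n ≥ 3k + 2`), the number of incomparable
pairs among the remaining `n - k` ciphertexts distributed into `k + 1` buckets is at least
`(n - 2k - 1)(n - 3k - 2) / (2(k+1))`, i.e. `Ω(n²/k − n)`. -/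
theorem incomparable_pairs_sharp_lower_bound (n k : ℕ) (h : 3 * k + 2 ≤ n)
    (f : Fin (n - k) → Fin (k + 1)) :
    ((n : ℝ) - 2 * k - 1) * ((n : ℝ) - 3 * k - 2) / (2 * (k + 1)) ≤
      ((Finset.univ.filter
        (fun p : Fin (n - k) × Fin (n - k) => p.1 < p.2 ∧ f p.1 = f p.2)).card : ℝ) := by
  have hkn : k ≤ n := by omega
  set c : Fin (k + 1) → ℕ := fun b => (univ.filter (fun i : Fin (n - k) => f i = b)).card with hc
  set S := univ.filter (fun p : Fin (n - k) × Fin (n - k) => p.1 < p.2 ∧ f p.1 = f p.2) with hS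
  set S' := univ.filter (fun p : Fin (n - k) × Fin (n - k) => p.2 < p.1 ∧ f p.1 = f p.2) with hS'
  set D := univ.filter (fun p : Fin (n - k) × Fin (n - k) => p.1 = p.2) with hD
  set F := univ.filter (fun p : Fin (n - k) × Fin (n - k) => f p.1 = f p.2) with hF
  -- sum of fiber sizes
  have hsum : ∑ b, c b = n - k := by
    rw [← Finset.card_eq_sum_card_fiberwise (fun x _ => mem_univ (f x))]
    simp
  -- card F = sum of squares
  have hFcard : F.card = ∑ b, c b ^ 2 := by
    rw [Finset.card_eq_sum_card_fiberwise (f := fun p : Fin (n - k) × Fin (n - k) => f p.1)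
      (t := univ) (fun x _ => mem_univ _)]
    refine Finset.sum_congr rfl fun b _ => ?_
    have : F.filter (fun p : Fin (n - k) × Fin (n - k) => f p.1 = b)
        = (univ.filter (fun i : Fin (n - k) => f i = b)) ×ˢ (univ.filter (fun i : Fin (n - k) => f i = b)) := by
      ext p
      simp only [hF, Finset.mem_filter, Finset.mem_product, Finset.mem_univ, true_and]
      constructor
      · rintro ⟨hfe, hb⟩; exact ⟨hb, hfe ▸ hb⟩
      · rintro ⟨h1, h2⟩; exact ⟨h1.trans h2.symm, h1⟩
    rw [this, Finset.card_product, sq]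
  -- card S' = card S
  have hS'S : S'.card = S.card := by
    apply Finset.card_bij (fun p _ => p.swap)
    · intro p hp; simp only [hS, hS', Finset.mem_filter, Finset.mem_univ, true_and] at *
      exact ⟨hp.1, hp.2.symm⟩
    · intro p hp q hq hpq
      exact Prod.ext (congrArg Prod.snd hpq) (congrArg Prod.fst hpq)
    · intro p hp
      refine ⟨p.swap, ?_, rfl⟩
      simp only [hS, hS', Finset.mem_filter, Finset.mem_univ, true_and] at *
      exact ⟨hp.1, hp.2.symm⟩
  -- card D = N
  have hDcard : D.card = n - k := by
    have : D = (univ : Finset (Fin (n - k))).diag := by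
      ext p
      simp [hD, Finset.mem_diag, Prod.ext_iff]
    rw [this, Finset.diag_card, Finset.card_univ, Fintype.card_fin]
  -- F = S ∪ S' ∪ D
  have hFsplit : F.card = S.card + S'.card + D.card := by
    have hunion : F = (S ∪ S') ∪ D := by
      ext p
      simp only [hF, hS, hS', hD, Finset.mem_union, Finset.mem_filter, Finset.mem_univ, true_and]
      constructor
      · intro hfe
        rcases lt_trichotomy p.1 p.2 with hlt | heq | hgt
        · exact Or.inl (Or.inl ⟨hlt, hfe⟩)
        · exact Or.inr heq
        · exact Or.inl (Or.inr ⟨hgt, hfe⟩)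
      · rintro ((⟨_, hfe⟩ | ⟨_, hfe⟩) | heq)
        · exact hfe
        · exact hfe
        · rw [heq]
    rw [hunion, Finset.card_union_of_disjoint, Finset.card_union_of_disjoint]
    · rw [Finset.disjoint_left]
      intro p hp hq
      simp only [hS, hS', Finset.mem_filter, Finset.mem_univ, true_and] at hp hq
      exact absurd hq.1 (not_lt_of_gt hp.1)
    · rw [Finset.disjoint_left]
      intro p hp hq
      simp only [hS, hS', hD, Finset.mem_union, Finset.mem_filter, Finset.mem_univ,
        true_and] at hp hq
      rcases hp with ⟨hlt, _⟩ | ⟨hlt, _⟩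
      · exact absurd hq (ne_of_lt hlt)
      · exact absurd hq.symm (ne_of_lt hlt)
  -- key identity: 2 * S.card + (n - k) = ∑ c b ^ 2
  have key : 2 * S.card + (n - k) = ∑ b, c b ^ 2 := by
    rw [← hFcard, hFsplit, hS'S, hDcard]; ring
  -- Cauchy-Schwarz
  have hCS : ((n - k : ℕ) : ℝ) ^ 2 ≤ (k + 1) * ∑ b, (c b : ℝ) ^ 2 := by
    have := sq_sum_le_card_mul_sum_sq (s := (univ : Finset (Fin (k+1))))
      (f := fun b => (c b : ℝ))
    simpa [hsum, ← Nat.cast_sum] using this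
  have hkey : 2 * (S.card : ℝ) + (n - k) = ∑ b, (c b : ℝ) ^ 2 := by
    exact_mod_cast congrArg (Nat.cast : ℕ → ℝ) key
  have hN : ((n - k : ℕ) : ℝ) = (n : ℝ) - k := by
    push_cast [Nat.cast_sub hkn]; ring
  have hk1 : (0 : ℝ) < (k : ℝ) + 1 := by positivity
  rw [div_le_iff₀ (by positivity)]
  have hNlb : (2 : ℝ) * k + 2 ≤ ((n - k : ℕ) : ℝ) := by
    rw [hN]; have : (3 : ℝ) * k + 2 ≤ n := by exact_mod_cast h
    linarith
  nlinarith [hCS, hkey, hN, hNlb, sq_nonneg (((n - k : ℕ):ℝ) - ((k:ℝ)+1))]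
end

section
/- Let L and n be real numbers with L ≥ 16 and n ≥ L, and let t be a natural number with t ≥ 2 · log_L(n). Then n · (log₂ L / L)^t ≤ L. In other words, after at most 2·log_L(n) successful splits, each of which reduces the largest partition by the factor log₂ L / L (= 2/z for z = 2L/log₂ L), a buffer of size n is reduced to size at most L. -/
/-- For reals `L ≥ 16`, `n ≥ L`, and a natural number `t ≥ 2·log_L(n)`, after `t` successful
splits each reducing the largest partition by the factor `log₂ L / L`, a buffer of size `n` is
reduced to size at most `L`: `n · (log₂ L / L)^t ≤ L`. -/
theorem split_recursion_depth (L n : ℝ) (hL : 16 ≤ L) (hn : L ≤ n) (t : ℕ)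
    (ht : 2 * Real.logb L n ≤ (t : ℝ)) :
    n * (Real.logb 2 L / L) ^ t ≤ L := by
  have hL0 : (0:ℝ) < L := by linarith
  have hL1 : (1:ℝ) < L := by linarith
  have hn0 : (0:ℝ) < n := by linarith
  have hs0 : 0 < Real.sqrt L := Real.sqrt_pos.2 hL0
  have hs4 : (4:ℝ) ≤ Real.sqrt L := by
    have : Real.sqrt 16 ≤ Real.sqrt L := Real.sqrt_le_sqrt hL
    have h16 : Real.sqrt 16 = 4 := by
      rw [show (16:ℝ) = 4^2 by norm_num, Real.sqrt_sq (by norm_num : (0:ℝ) ≤ 4)]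
    linarith
  have hlog2 : (0.6931471803:ℝ) < Real.log 2 := Real.log_two_gt_d9
  -- log √L ≤ (log 2 / 2) √L
  have haux : Real.log (Real.sqrt L) ≤ Real.log 2 / 2 * Real.sqrt L := by
    have h1 : Real.log (Real.sqrt L / 4) ≤ Real.sqrt L / 4 - 1 :=
      Real.log_le_sub_one_of_pos (by positivity)
    have h2 : Real.log (Real.sqrt L / 4) = Real.log (Real.sqrt L) - Real.log 4 := by
      rw [Real.log_div (by positivity) (by norm_num)]
    have h3 : Real.log 4 = 2 * Real.log 2 := by
      rw [show (4:ℝ) = 2^2 by norm_num, Real.log_pow]; push_cast; ring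
    nlinarith [hlog2, hs4]
  -- log₂ L ≤ √L
  have hlogb : Real.logb 2 L ≤ Real.sqrt L := by
    rw [Real.logb, div_le_iff₀ (by positivity : (0:ℝ) < Real.log 2)]
    have hls : Real.log (Real.sqrt L) = Real.log L / 2 := Real.log_sqrt hL0.le
    nlinarith [haux]
  have hr0 : 0 ≤ Real.logb 2 L := Real.logb_nonneg (by norm_num) (by linarith)
  have hrr0 : 0 ≤ Real.logb 2 L / L := by positivity
  have hr : Real.logb 2 L / L ≤ 1 / Real.sqrt L := by
    rw [div_le_div_iff₀ hL0 hs0]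
    calc Real.logb 2 L * Real.sqrt L ≤ Real.sqrt L * Real.sqrt L :=
          mul_le_mul_of_nonneg_right hlogb hs0.le
      _ = L := Real.mul_self_sqrt hL0.le
      _ = 1 * L := (one_mul L).symm
  have hpow : (Real.logb 2 L / L) ^ t ≤ (1 / Real.sqrt L) ^ t :=
    pow_le_pow_left₀ hrr0 hr t
  -- n ≤ √(L^t)
  have hnle : n ≤ Real.sqrt (L ^ t) := by
    have h1 : n = L ^ (Real.logb L n) := (Real.rpow_logb hL0 (by linarith) hn0).symm
    have h2 : Real.sqrt (L ^ t) = L ^ ((t : ℝ) / 2) := by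
      rw [Real.sqrt_eq_rpow, ← Real.rpow_natCast L t, ← Real.rpow_mul hL0.le]
      ring_nf
    rw [h1, h2]
    exact Real.rpow_le_rpow_of_exponent_le hL1.le (by linarith)
  have hst0 : 0 < Real.sqrt (L ^ t) := Real.sqrt_pos.2 (by positivity)
  have hone : (1 / Real.sqrt L) ^ t = 1 / Real.sqrt (L ^ t) := by
    rw [div_pow, one_pow]
    congr 1
    rw [Real.sqrt_eq_rpow, Real.sqrt_eq_rpow, ← Real.rpow_natCast (L ^ (1/(2:ℝ))) t,
      ← Real.rpow_natCast L t, ← Real.rpow_mul hL0.le, ← Real.rpow_mul hL0.le]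
    ring_nf
  calc n * (Real.logb 2 L / L) ^ t
      ≤ n * (1 / Real.sqrt L) ^ t := by
        exact mul_le_mul_of_nonneg_left hpow hn0.le
    _ = n / Real.sqrt (L ^ t) := by rw [hone]; ring
    _ ≤ Real.sqrt (L ^ t) / Real.sqrt (L ^ t) := by gcongr
    _ = 1 := div_self hst0.ne'
    _ ≤ L := by linarith
end
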